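/- For every frontier position π of an AND-OR synthesis tree T with value function V : M → ℝ, the quantity V_t(π) equals the minimum, over all synthesis routes of the root of T that pass through π, of the route's total cost with respect to V; i.e. V_t(π) is the cost of the best synthesis plan in T containing the frontier node at π. -/

import Mathlib

inductive Mol (M : Type) where
  | frontier : M → Mol M
  | node : (ℝ × List (Mol M)) → List (ℝ × List (Mol M)) → Mol M

mutual
noncomputable def rn {M : Type} (V : M → ℝ) : Mol M → ℝ
  | .frontier m => V m
  | .node r rs => (rs.attach.map fun ⟨R, _⟩ => rnR V R).foldr min (rnR V r)
termination_by u => sizeOf u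
decreasing_by
  · simp; omega
  · have := List.sizeOf_lt_of_mem ‹R ∈ rs›; simp; omega

noncomputable def rnR {M : Type} (V : M → ℝ) : ℝ × List (Mol M) → ℝ
  | (c, ms) => c + (ms.attach.map fun ⟨u, _⟩ => rn V u).sum
termination_by R => sizeOf R
decreasing_by
  · have := List.sizeOf_lt_of_mem ‹u ∈ ms›; simp; omega
end

/-- A frontier position: a root-to-leaf path selecting, at each internal
molecule node, one reaction child and one molecule child of that reaction,
terminating at a frontier leaf. -/
inductive FPos {M : Type} : Mol M → Type
  | leaf (m : M) : FPos (.frontier m)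
  | step {r rs} (i : Fin (r :: rs : List (ℝ × List (Mol M))).length)
      (j : Fin ((r :: rs).get i).2.length)
      (rest : FPos (((r :: rs).get i).2.get j)) :
      FPos (.node r rs)

/-- `Vt V π`: the sum of the costs of the reaction nodes on `π`, plus the sum of
`rn V` over the off-path molecule children of those reaction nodes, plus `V` of
the molecule at the leaf of `π`. -/
noncomputable def Vt {M : Type} (V : M → ℝ) : {u : Mol M} → FPos u → ℝ
  | _, .leaf m => V m
  | _, .step (r := r) (rs := rs) i j rest =>
      ((r :: rs).get i).1
        + ∑ j' ∈ Finset.univ.erase j, rn V (((r :: rs).get i).2.get j')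
        + Vt V rest

inductive Route {M : Type} : Mol M → Type
  | leaf (m : M) : Route (.frontier m)
  | step {r rs} (i : Fin (r :: rs : List (ℝ × List (Mol M))).length)
      (subs : ∀ j : Fin ((r :: rs).get i).2.length, Route (((r :: rs).get i).2.get j)) :
      Route (.node r rs)

noncomputable def routeCost {M : Type} (V : M → ℝ) : {u : Mol M} → Route u → ℝ
  | _, .leaf m => V m
  | _, .step (r := r) (rs := rs) i subs =>
      ((r :: rs).get i).1 + ∑ j, routeCost V (subs j)

/-- A route passes through a frontier position if at every internal molecule
node on the position it selects the reaction child lying on the position, and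
its subroute at the next molecule node passes through the rest of the
position. -/
inductive Passes {M : Type} : {u : Mol M} → Route u → FPos u → Prop
  | leaf (m : M) : Passes (Route.leaf m) (FPos.leaf m)
  | step {r rs} (i : Fin (r :: rs : List (ℝ × List (Mol M))).length)
      (subs : ∀ j' : Fin ((r :: rs).get i).2.length, Route (((r :: rs).get i).2.get j'))
      (j : Fin ((r :: rs).get i).2.length)
      (rest : FPos (((r :: rs).get i).2.get j)) :
      Passes (subs j) rest → Passes (Route.step i subs) (FPos.step i j rest)

/-!
A route through `π` is forced to take the reaction on `π` at every molecule node of `π`, but is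
free below each off-path child of those reactions. Since `rn V` is the least cost of a route of a
molecule node, the cheapest free choices cost exactly the `rn V` of the off-path children, and the
on-path part is handled by induction on `π`.
-/

theorem List.isLeast_foldr_min {α : Type*} [LinearOrder α] (l : List α) (b : α) :
    IsLeast {a | a ∈ b :: l} (l.foldr min b) := by
  induction l with
  | nil => simp [IsLeast, lowerBounds]
  | cons a l ih =>
    refine ⟨?_, ?_⟩
    · rcases min_choice a (l.foldr min b) with h | h <;> rw [List.foldr_cons, h]
      · simp
      · exact List.cons_subset_cons b (List.subset_cons_self a l) ih.1
    · intro x hx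
      rcases List.mem_cons.1 hx with rfl | hx
      · exact min_le_of_right_le (ih.2 (List.mem_cons_self ..))
      rcases List.mem_cons.1 hx with rfl | hx
      · exact min_le_left _ _
      · exact min_le_of_right_le (ih.2 (List.mem_cons_of_mem _ hx))

section
variable {M : Type} (V : M → ℝ)

theorem rnR_eq_add_sum (R : ℝ × List (Mol M)) :
    rnR V R = R.1 + ∑ j : Fin R.2.length, rn V (R.2.get j) := by
  obtain ⟨c, ms⟩ := R
  simp [rnR, List.map_subtype]

theorem isLeast_rn_node (r : ℝ × List (Mol M)) (rs : List (ℝ × List (Mol M))) :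
    IsLeast (Set.range fun i => rnR V ((r :: rs).get i)) (rn V (.node r rs)) := by
  have h := List.isLeast_foldr_min (rs.map (rnR V)) (rnR V r)
  rw [← List.map_cons] at h
  have hrange :
      Set.range (fun i => rnR V ((r :: rs).get i)) = {a | a ∈ (r :: rs).map (rnR V)} := by
    rw [Set.range_comp' (rnR V), Set.range_list_get]
    ext; simp [eq_comm]
  rw [hrange, rn]
  simpa only [List.map_subtype, List.unattach_attach] using h

theorem sizeOf_reactant_lt_sizeOf_node (r : ℝ × List (Mol M)) (rs : List (ℝ × List (Mol M)))
    (i : Fin (r :: rs).length) (j : Fin ((r :: rs).get i).2.length) :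
    sizeOf (((r :: rs).get i).2.get j) < sizeOf (Mol.node r rs) := by
  have hR : sizeOf ((r :: rs).get i) < sizeOf (r :: rs) :=
    List.sizeOf_lt_of_mem (List.get_mem _ _)
  have hm : sizeOf (((r :: rs).get i).2.get j) < sizeOf ((r :: rs).get i).2 :=
    List.sizeOf_lt_of_mem (List.get_mem _ _)
  have hsnd : ∀ R : ℝ × List (Mol M), sizeOf R.2 < sizeOf R := fun ⟨_, _⟩ => by simp
  have := hsnd ((r :: rs).get i)
  simp only [Mol.node.sizeOf_spec, List.cons.sizeOf_spec] at hR ⊢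
  omega

theorem rn_le_routeCost {u : Mol M} (rt : Route u) : rn V u ≤ routeCost V rt := by
  induction rt with
  | leaf m => simp [rn, routeCost]
  | step i subs ih =>
    calc _ ≤ rnR V _ := (isLeast_rn_node V _ _).2 ⟨i, rfl⟩
      _ ≤ _ := by
        rw [rnR_eq_add_sum, routeCost]
        gcongr with j
        exact ih j

theorem exists_routeCost_eq_rn : ∀ u : Mol M, ∃ rt : Route u, routeCost V rt = rn V u
  | .frontier m => ⟨.leaf m, by simp [rn, routeCost]⟩
  | .node r rs => by
    obtain ⟨⟨i, hi⟩, -⟩ := isLeast_rn_node V r rs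
    choose subs hsubs using fun j => exists_routeCost_eq_rn (((r :: rs).get i).2.get j)
    exact ⟨.step i subs, by simp only [routeCost, hsubs, ← hi, rnR_eq_add_sum]⟩
termination_by u => sizeOf u
decreasing_by
  all_goals exact sizeOf_reactant_lt_sizeOf_node r rs i _

theorem routeCost_step_eq_add_sum_erase {r : ℝ × List (Mol M)}
    {rs : List (ℝ × List (Mol M))} (i : Fin (r :: rs).length)
    (subs : ∀ j, Route (((r :: rs).get i).2.get j)) (j : Fin ((r :: rs).get i).2.length) :
    routeCost V (.step i subs) =
      ((r :: rs).get i).1 + ∑ j' ∈ Finset.univ.erase j, routeCost V (subs j')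
        + routeCost V (subs j) := by
  rw [routeCost, ← Finset.add_sum_erase _ _ (Finset.mem_univ j)]
  ring

end

theorem Vt_eq_min_routeCost_through {M : Type} (V : M → ℝ) (u : Mol M) (π : FPos u) :
    IsLeast {x : ℝ | ∃ rt : Route u, Passes rt π ∧ routeCost V rt = x} (Vt V π) := by
  induction π with
  | leaf m =>
    refine ⟨⟨.leaf m, .leaf m, rfl⟩, ?_⟩
    rintro x ⟨rt, hp, rfl⟩
    cases hp
    rfl
  | step i j rest ih =>
    rename_i r rs
    obtain ⟨⟨rt, hpass, hcost⟩, hle⟩ := ih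
    constructor
    · choose opt hopt using fun j' => exists_routeCost_eq_rn V (((r :: rs).get i).2.get j')
      let subs := Function.update opt j rt
      refine ⟨.step i subs, .step i subs j rest (by simpa [subs] using hpass), ?_⟩
      rw [routeCost_step_eq_add_sum_erase V i subs j, Vt]
      congr 2
      · exact Finset.sum_congr rfl fun j' hj' => by
          simp [subs, Function.update_of_ne (Finset.ne_of_mem_erase hj'), hopt]
      · simpa [subs] using hcost
    · rintro x ⟨rt', hp, rfl⟩
      cases hp with
      | step _ subs _ _ hsub =>
        rw [routeCost_step_eq_add_sum_erase V i subs j, Vt]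
        gcongr with j' hj'
        · exact rn_le_routeCost V _
        · exact hle ⟨_, hsub, rfl⟩
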